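/- arXiv:1912.04666 — 2 statements merged into one kernel-verified Lean document; each statement's English description precedes it below -/
import Mathlib

section
/- Let φ : B_b(S) → ℝ be a monetary risk measure on a metric space S with concentration function J and minimal rate function I_min(x) = sup_{f∈C_b(S)}{f(x) − φ(f)}. Then −inf_{x ∈ A} I_min(x) ≤ J_A for every open set A ⊆ S. If moreover φ is max-stable, then J_K ≤ −inf_{x ∈ K} I_min(x) for every compact set K ⊆ S. -/
open MeasureTheory Set Metric Filter Topology

noncomputable section

/-- The bounded Borel measurable functions on `S`. -/
def Bb (S : Type*) [MeasurableSpace S] : Set (S → ℝ) :=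
  {f | Measurable f ∧ ∃ C : ℝ, ∀ x, |f x| ≤ C}

/-- `φ` is a monetary risk measure on the class of functions `X`:
normalization, translation property and monotonicity. -/
def Monetary {S : Type*} (X : Set (S → ℝ)) (φ : (S → ℝ) → ℝ) : Prop :=
  φ 0 = 0 ∧
  (∀ f ∈ X, ∀ c : ℝ, φ (f + fun _ => c) = φ f + c) ∧
  (∀ f ∈ X, ∀ g ∈ X, (∀ x, f x ≤ g x) → φ f ≤ φ g)

/-- `φ` is max-stable on `X`. -/
def MaxStable {S : Type*} (X : Set (S → ℝ)) (φ : (S → ℝ) → ℝ) : Prop :=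
  ∀ f ∈ X, ∀ g ∈ X, φ (f ⊔ g) ≤ max (φ f) (φ g)

/-- The concentration function `J_A = inf_{r ∈ ℝ} φ(r · 1_{Aᶜ})`. -/
def conc {S : Type*} (φ : (S → ℝ) → ℝ) (A : Set S) : EReal :=
  ⨅ r : ℝ, (φ (Aᶜ.indicator fun _ => r) : EReal)

/-- The minimal rate function `I_min(x) = sup_{f ∈ C_b(S)} (f(x) - φ(f))`,
with values in `[0, +∞] ⊆ EReal`. -/
def IminE {S : Type*} [TopologicalSpace S] (φ : (S → ℝ) → ℝ) (x : S) : EReal :=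
  ⨆ f : BoundedContinuousFunction S ℝ, ((f x - φ ⇑f : ℝ) : EReal)

-- auxiliary lemmas

lemma indicator_mem_Bb {S : Type*} [MeasurableSpace S] {B : Set S} (hB : MeasurableSet B)
    (r : ℝ) : (B.indicator fun _ => r) ∈ Bb S := by
  refine ⟨(measurable_const).indicator hB, |r|, fun x => ?_⟩
  by_cases hx : x ∈ B
  · simp [Set.indicator_of_mem hx]
  · simp [Set.indicator_of_notMem hx, abs_nonneg]

lemma bcf_mem_Bb {S : Type*} [MetricSpace S] [MeasurableSpace S] [BorelSpace S]
    (f : BoundedContinuousFunction S ℝ) : ⇑f ∈ Bb S := by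
  refine ⟨f.continuous.measurable, ‖f‖, fun x => ?_⟩
  simpa [Real.norm_eq_abs] using f.norm_coe_le_norm x

lemma add_const_mem_Bb {S : Type*} [MeasurableSpace S] {f : S → ℝ} (hf : f ∈ Bb S) (c : ℝ) :
    (f + fun _ => c) ∈ Bb S := by
  obtain ⟨hm, C, hC⟩ := hf
  refine ⟨hm.add measurable_const, C + |c|, fun x => ?_⟩
  calc |f x + c| ≤ |f x| + |c| := abs_add_le _ _
    _ ≤ C + |c| := by linarith [hC x]

lemma sup_mem_Bb {S : Type*} [MeasurableSpace S] {f g : S → ℝ} (hf : f ∈ Bb S)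
    (hg : g ∈ Bb S) : f ⊔ g ∈ Bb S := by
  obtain ⟨hmf, C, hC⟩ := hf
  obtain ⟨hmg, D, hD⟩ := hg
  refine ⟨hmf.max hmg, max C D, fun x => ?_⟩
  have := hC x; have := hD x
  simp only [Pi.sup_apply]
  rw [abs_le] at *
  constructor
  · exact le_max_of_le_left (by linarith [le_max_left C D])
  · exact max_le (by linarith [le_max_left C D]) (by linarith [le_max_right C D])

/-- finite max-stability. -/
lemma finset_sup_bound {S : Type*} [MeasurableSpace S] {φ : (S → ℝ) → ℝ}
    (hms : MaxStable (Bb S) φ)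
    {ι : Type*} (G : ι → (S → ℝ)) (t : Finset ι) (ht : t.Nonempty)
    (hG : ∀ i ∈ t, G i ∈ Bb S) :
    (fun y => t.sup' ht fun i => G i y) ∈ Bb S ∧
      φ (fun y => t.sup' ht fun i => G i y) ≤ t.sup' ht fun i => φ (G i) := by
  revert hG
  induction ht using Finset.Nonempty.cons_induction with
  | singleton i => intro hG; simpa using hG i (by simp)
  | cons a s ha hs ih =>
    intro hG
    have hGa : G a ∈ Bb S := hG a (Finset.mem_cons_self a s)
    obtain ⟨ihBb, ihle⟩ := ih (fun i hi => hG i (Finset.mem_cons_of_mem hi))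
    have hfun : (fun y => (Finset.cons a s ha).sup' (Finset.cons_nonempty ha) fun i => G i y)
        = G a ⊔ (fun y => s.sup' hs fun i => G i y) := by
      funext y
      rw [Pi.sup_apply, Finset.sup'_cons hs]
    constructor
    · rw [hfun]; exact sup_mem_Bb hGa ihBb
    · rw [hfun, Finset.sup'_cons hs]
      calc φ (G a ⊔ fun y => s.sup' hs fun i => G i y)
          ≤ max (φ (G a)) (φ (fun y => s.sup' hs fun i => G i y)) :=
            hms _ hGa _ ihBb
        _ ≤ (φ (G a)) ⊔ (s.sup' hs fun i => φ (G i)) := max_le_max le_rfl ihle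

theorem stmt11 {S : Type*} [MetricSpace S] [MeasurableSpace S] [BorelSpace S]
    (φ : (S → ℝ) → ℝ) (hmon : Monetary (Bb S) φ) :
    (∀ A : Set S, IsOpen A → -(⨅ x ∈ A, IminE φ x) ≤ conc φ A) ∧
    (MaxStable (Bb S) φ →
      ∀ K : Set S, IsCompact K → conc φ K ≤ -(⨅ x ∈ K, IminE φ x)) := by
  classical
  obtain ⟨hz, htr, hmono⟩ := hmon
  have hzero : (0 : S → ℝ) ∈ Bb S := ⟨measurable_const, 0, by simp⟩
  constructor
  · intro A hA
    refine le_iInf fun r => ?_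
    rw [EReal.neg_le]
    refine le_iInf₂ fun x hx => ?_
    have hind : (Aᶜ.indicator fun _ => r) ∈ Bb S :=
      indicator_mem_Bb hA.measurableSet.compl r
    rcases le_or_gt 0 r with hr | hr
    · -- use f = 0
      have h0 : (0:ℝ) ≤ φ (Aᶜ.indicator fun _ => r) := by
        have := hmono 0 hzero _ hind (fun y => by
          by_cases hy : y ∈ Aᶜ
          · simpa [Set.indicator_of_mem hy] using hr
          · simp [Set.indicator_of_notMem hy])
        simpa [hz] using this
      refine le_trans ?_ (le_iSup _ (0 : BoundedContinuousFunction S ℝ))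
      rw [← EReal.coe_neg, EReal.coe_le_coe_iff]
      simp [hz]
      linarith
    · obtain ⟨δ, hδ, hball⟩ := Metric.isOpen_iff.mp hA x hx
      have hmem01 : ∀ y : S, 0 ≤ min 1 (dist y x / δ) ∧ min 1 (dist y x / δ) ≤ 1 := by
        intro y
        exact ⟨le_min one_pos.le (div_nonneg dist_nonneg hδ.le), min_le_left _ _⟩
      set f0 : C(S, ℝ) := ⟨fun y => r * min 1 (dist y x / δ), by
        exact continuous_const.mul ((continuous_const.min
          ((continuous_id.dist continuous_const).div_const δ)))⟩ with hf0
      have hbd : ∀ y : S, |f0 y| ≤ |r| := by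
        intro y
        obtain ⟨h1, h2⟩ := hmem01 y
        rw [hf0]
        simp only [ContinuousMap.coe_mk, abs_mul]
        calc |r| * |min 1 (dist y x / δ)| ≤ |r| * 1 := by
              refine mul_le_mul_of_nonneg_left ?_ (abs_nonneg r)
              rw [abs_le]; constructor <;> linarith
          _ = |r| := mul_one _
      set f : BoundedContinuousFunction S ℝ :=
        BoundedContinuousFunction.mkOfBound f0 (2 * |r|) (fun a b => by
          rw [Real.dist_eq]
          calc |f0 a - f0 b| ≤ |f0 a| + |f0 b| := abs_sub _ _
            _ ≤ 2 * |r| := by linarith [hbd a, hbd b]) with hf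
      have hfx : f x = 0 := by
        show r * min 1 (dist x x / δ) = 0
        simp
      have hle : ∀ y, f y ≤ (Aᶜ.indicator fun _ => r) y := by
        intro y
        by_cases hy : y ∈ A
        · rw [Set.indicator_of_notMem (by simpa using hy)]
          exact mul_nonpos_of_nonpos_of_nonneg hr.le (hmem01 y).1
        · rw [Set.indicator_of_mem (by simpa using hy)]
          have hdist : δ ≤ dist y x := by
            by_contra hc
            push_neg at hc
            exact hy (hball hc)
          have : min 1 (dist y x / δ) = 1 :=
            min_eq_left ((one_le_div hδ).mpr hdist)
          show r * min 1 (dist y x / δ) ≤ r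
          rw [this, mul_one]
      have hφ : φ ⇑f ≤ φ (Aᶜ.indicator fun _ => r) :=
        hmono _ (bcf_mem_Bb f) _ hind hle
      refine le_trans ?_ (le_iSup _ f)
      rw [← EReal.coe_neg, EReal.coe_le_coe_iff, hfx]
      linarith
  · intro hms K hK
    have key : ∀ m : ℝ, (m : EReal) < ⨅ x ∈ K, IminE φ x →
        conc φ K ≤ ((-m : ℝ) : EReal) := by
      intro m hm
      rcases K.eq_empty_or_nonempty with rfl | hKne
      · refine iInf_le_of_le (-m) ?_
        have hiu : ((∅ : Set S)ᶜ.indicator fun _ => (-m : ℝ)) = (0 : S → ℝ) + fun _ => (-m) := by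
          funext y
          simp
        rw [hiu, htr 0 hzero (-m), hz]
        simp
      · have hsel : ∀ x : S, ∃ f : BoundedContinuousFunction S ℝ,
            x ∈ K → m < f x - φ ⇑f := by
          intro x
          by_cases hx : x ∈ K
          · have hlt : (m : EReal) < IminE φ x := lt_of_lt_of_le hm (iInf₂_le x hx)
            rw [IminE, lt_iSup_iff] at hlt
            obtain ⟨f, hf⟩ := hlt
            exact ⟨f, fun _ => by exact_mod_cast hf⟩
          · exact ⟨0, fun h => absurd h hx⟩
        choose F hF using hsel
        obtain ⟨t, htK, hcov⟩ := hK.elim_nhds_subcover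
          (fun x => {y | m + φ ⇑(F x) < F x y})
          (fun x hx => (isOpen_lt continuous_const (F x).continuous).mem_nhds
            (by simpa using by linarith [hF x hx]))
        obtain ⟨x0, hx0⟩ := hKne
        have htne : t.Nonempty := by
          have := hcov hx0
          rw [Set.mem_iUnion₂] at this
          obtain ⟨a, hat, -⟩ := this
          exact ⟨a, hat⟩
        set G : S → (S → ℝ) := fun x => ⇑(F x) + fun _ => (-φ ⇑(F x)) with hG
        have hGBb : ∀ i ∈ t, G i ∈ Bb S :=
          fun i _ => add_const_mem_Bb (bcf_mem_Bb (F i)) _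
        obtain ⟨hgBb, hgle⟩ := finset_sup_bound hms G t htne hGBb
        have hφG : ∀ i, φ (G i) = 0 := by
          intro i
          rw [hG]
          simp only
          rw [htr _ (bcf_mem_Bb (F i))]
          ring
        have hsup0 : (t.sup' htne fun i => φ (G i)) = 0 := by
          rw [show (fun i => φ (G i)) = fun _ : S => (0:ℝ) from funext hφG]
          exact Finset.sup'_const _ _
        set g : S → ℝ := fun y => t.sup' htne fun i => G i y with hg
        obtain ⟨-, C, hC⟩ := id hgBb
        have hφg : φ g ≤ 0 := by rw [← hsup0]; exact hgle
        have hcomp : ∀ y, (Kᶜ.indicator fun _ => (-C - m)) y ≤ g y + (-m) := by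
          intro y
          by_cases hy : y ∈ K
          · rw [Set.indicator_of_notMem (by simpa using hy)]
            have := hcov hy
            rw [Set.mem_iUnion₂] at this
            obtain ⟨i, hit, hyi⟩ := this
            have h1 : m + φ ⇑(F i) < F i y := hyi
            have h2 : G i y ≤ g y := Finset.le_sup' (fun j => G j y) hit
            have h3 : G i y = F i y + (-φ ⇑(F i)) := rfl
            show (0:ℝ) ≤ g y + (-m)
            rw [h3] at h2
            linarith
          · rw [Set.indicator_of_mem (by simpa using hy)]
            have := (abs_le.mp (hC y)).1
            show -C - m ≤ g y + (-m)
            linarith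
        have hindK : (Kᶜ.indicator fun _ => (-C - m)) ∈ Bb S :=
          indicator_mem_Bb hK.isClosed.measurableSet.compl _
        have hstep : φ (Kᶜ.indicator fun _ => (-C - m)) ≤ -m := by
          calc φ (Kᶜ.indicator fun _ => (-C - m))
              ≤ φ (g + fun _ => -m) := hmono _ hindK _ (add_const_mem_Bb hgBb _) hcomp
            _ = φ g + (-m) := htr _ hgBb _
            _ ≤ -m := by linarith
        refine iInf_le_of_le (-C - m) ?_
        exact_mod_cast hstep
    by_contra hcon
    push_neg at hcon
    rw [EReal.lt_iff_exists_real_btwn] at hcon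
    obtain ⟨x, hx1, hx2⟩ := hcon
    have hx1' : ((-x : ℝ) : EReal) < ⨅ x ∈ K, IminE φ x := by
      rw [EReal.coe_neg, EReal.neg_lt_comm]
      exact hx1
    have := key (-x) hx1'
    rw [neg_neg] at this
    exact absurd hx2 (not_lt.mpr this)
end
end

section
/- Let φ : B_b(S) → ℝ be a locally max-stable monetary risk measure on a metric space S satisfying the tightness condition: for every M > 0 there exists a compact set K ⊆ S with J_{K^c} ≤ −M, where J_A := inf_{r∈ℝ} φ(r·1_{A^c}). Then φ(f) = sup_{x∈S}{ f(x) − I_min(x) } for all f ∈ C_b(S), φ satisfies the LDP with rate function I_min, and I_min has compact sublevel sets. -/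
open MeasureTheory Set Metric Filter Topology

noncomputable section

/-- The class `C^K(S)` of functions of the form `f·1_K + r·1_{Kᶜ}` with `f`
continuous on `K` and `r ∈ ℝ`. -/
def CK {S : Type*} [TopologicalSpace S] (K : Set S) : Set (S → ℝ) :=
  {h : S → ℝ | ∃ (f : S → ℝ) (r : ℝ), ContinuousOn f K ∧
    h = K.indicator f + Kᶜ.indicator fun _ => r}

/-!
On a compact `K`, every `x` with `f x - t < I_min x` admits `h ∈ C_b(S)` with `φ h = t` and `h > f`
near `x`. Finitely many such `h` cover `K`; glued with the constant `‖f‖` off `K` they lie in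
`C^K(S)`, and max-stability there bounds `φ f` by `max t (‖f‖ + J_{Kᶜ})`. Tightness makes `J_{Kᶜ}`
as negative as needed, so `φ f ≤ sup (f - I_min)`; the reverse inequality is the definition of `I_min`.

The remaining claims come from testing `φ` against Urysohn functions. One vanishing at `x ∉ closure B`
and equal to `r ≤ 0` on `B` gives `-φ (r 1_B) ≤ I_min x`: this is the LDP lower bound, and it confines
every sublevel set of `I_min` to a compact `K` with `J_{Kᶜ}` very negative. One vanishing on `closure A`
and equal to `r < t` on the closed set `{I_min ≤ -t}` stays below `t + I_min` everywhere, so the first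
part bounds its risk by `t`; this is the LDP upper bound.
-/

open scoped BoundedContinuousFunction

lemma EReal.coe_sub_le_iff_sub_le {a c : ℝ} {b : EReal} :
    ((a - c : ℝ) : EReal) ≤ b ↔ (a : EReal) - b ≤ c := by
  induction b with
  | bot => simp only [le_bot_iff, EReal.coe_ne_bot, EReal.coe_sub_bot, top_le_iff, EReal.coe_ne_top]
  | coe b => norm_cast; constructor <;> intro h <;> linarith
  | top => simp only [le_top, EReal.sub_top, bot_le]

lemma EReal.coe_sub_lt_iff_sub_lt {a c : ℝ} {b : EReal} :
    ((a - c : ℝ) : EReal) < b ↔ (a : EReal) - b < c := by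
  induction b with
  | bot => simp only [not_lt_bot, EReal.coe_sub_bot, not_top_lt]
  | coe b => norm_cast; constructor <;> intro h <;> linarith
  | top => simp only [EReal.coe_lt_top, EReal.sub_top, EReal.bot_lt_coe]

section RiskMeasure

variable {S : Type*} {φ : (S → ℝ) → ℝ}

section BoundedBorel

variable [MeasurableSpace S]

lemma const_mem_Bb (c : ℝ) : (fun _ : S => c) ∈ Bb S :=
  ⟨measurable_const, |c|, fun _ => le_rfl⟩

lemma indicator_const_mem_Bb {A : Set S} (hA : MeasurableSet A) (r : ℝ) :
    A.indicator (fun _ => r) ∈ Bb S :=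
  ⟨measurable_const.indicator hA, |r|, fun x => by by_cases hx : x ∈ A <;> simp [hx]⟩

namespace Monetary

lemma map_add_const (hmon : Monetary (Bb S) φ) {f : S → ℝ} (hf : f ∈ Bb S) (c : ℝ) :
    φ (f + fun _ => c) = φ f + c :=
  hmon.2.1 f hf c

lemma mono (hmon : Monetary (Bb S) φ) {f g : S → ℝ} (hf : f ∈ Bb S) (hg : g ∈ Bb S)
    (h : f ≤ g) : φ f ≤ φ g :=
  hmon.2.2 f hf g hg h

lemma map_const (hmon : Monetary (Bb S) φ) (c : ℝ) : φ (fun _ => c) = c := by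
  simpa [hmon.1] using hmon.map_add_const (f := 0) (const_mem_Bb 0) c

lemma le_const (hmon : Monetary (Bb S) φ) {f : S → ℝ} (hf : f ∈ Bb S) {c : ℝ}
    (h : ∀ x, f x ≤ c) : φ f ≤ c := by
  simpa [hmon.map_const] using hmon.mono hf (const_mem_Bb c) h

lemma const_le (hmon : Monetary (Bb S) φ) {f : S → ℝ} (hf : f ∈ Bb S) {c : ℝ}
    (h : ∀ x, c ≤ f x) : c ≤ φ f := by
  simpa [hmon.map_const] using hmon.mono (const_mem_Bb c) hf h

end Monetary

end BoundedBorel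

lemma MaxStable.finset_sup'_le {X : Set (S → ℝ)} (hms : MaxStable X φ)
    (hX : ∀ f ∈ X, ∀ g ∈ X, f ⊔ g ∈ X) {ι : Type*} {T : Finset ι} (hT : T.Nonempty)
    {u : ι → S → ℝ} {c : ℝ} (hu : ∀ i ∈ T, u i ∈ X ∧ φ (u i) ≤ c) :
    φ (T.sup' hT u) ≤ c :=
  (T.sup'_induction hT u (p := fun v => v ∈ X ∧ φ v ≤ c)
    (fun _ hv _ hw => ⟨hX _ hv.1 _ hw.1, (hms _ hv.1 _ hw.1).trans (max_le hv.2 hw.2)⟩) hu).2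

section Topological

variable [TopologicalSpace S]

def LocallyMaxStable (φ : (S → ℝ) → ℝ) : Prop :=
  ∀ K : Set S, IsCompact K → MaxStable (CK K) φ

def Tight (φ : (S → ℝ) → ℝ) : Prop :=
  ∀ M : ℝ, 0 < M → ∃ K : Set S, IsCompact K ∧ conc φ Kᶜ ≤ ((-M : ℝ) : EReal)

lemma sup_mem_CK {K : Set S} {u v : S → ℝ} (hu : u ∈ CK K) (hv : v ∈ CK K) :
    u ⊔ v ∈ CK K := by
  obtain ⟨f, r, hf, rfl⟩ := hu
  obtain ⟨g, s, hg, rfl⟩ := hv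
  refine ⟨f ⊔ g, r ⊔ s, hf.sup hg, funext fun y => ?_⟩
  by_cases hy : y ∈ K <;> simp [hy]

lemma le_IminE (f : S →ᵇ ℝ) (x : S) : ((f x - φ f : ℝ) : EReal) ≤ IminE φ x :=
  le_iSup (fun g : S →ᵇ ℝ => ((g x - φ g : ℝ) : EReal)) f

lemma IminE_nonneg (hφ : φ 0 = 0) (x : S) : 0 ≤ IminE φ x := by
  simpa [hφ] using le_IminE (φ := φ) 0 x

lemma isClosed_setOf_IminE_le (c : EReal) : IsClosed {x : S | IminE φ x ≤ c} :=
  (lowerSemicontinuous_iSup fun f : S →ᵇ ℝ =>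
    (continuous_coe_real_ereal.comp (f.continuous.sub continuous_const)).lowerSemicontinuous)
    |>.isClosed_preimage c

lemma exists_isCompact_phi_indicator_lt (htight : Tight φ) (M : ℝ) :
    ∃ K : Set S, IsCompact K ∧ ∃ r : ℝ, φ (K.indicator fun _ => r) < -M := by
  obtain ⟨K, hK, hJ⟩ := htight (max M 0 + 1) (by positivity)
  have hJM : conc φ Kᶜ < ((-M : ℝ) : EReal) :=
    hJ.trans_lt (EReal.coe_lt_coe_iff.2 (by linarith [le_max_left M 0]))
  obtain ⟨r, hr⟩ := iInf_lt_iff.1 hJM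
  exact ⟨K, hK, r, by simp only [compl_compl] at hr; exact_mod_cast hr⟩

variable [MeasurableSpace S] [OpensMeasurableSpace S]

lemma BoundedContinuousFunction.mem_Bb (f : S →ᵇ ℝ) : ⇑f ∈ Bb S :=
  ⟨f.continuous.measurable, ‖f‖, fun x => by simpa using f.norm_coe_le_norm x⟩

lemma CK_subset_Bb [T2Space S] {K : Set S} (hK : IsCompact K) : CK K ⊆ Bb S := by
  classical
  rintro _ ⟨f, r, hf, rfl⟩
  obtain ⟨C, hC⟩ := hK.exists_bound_of_continuousOn hf
  rw [indicator_add_compl_eq_piecewise]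
  refine ⟨hf.measurable_piecewise continuousOn_const hK.isClosed.measurableSet,
    max C |r|, fun x => ?_⟩
  by_cases hx : x ∈ K
  · simpa [hx] using le_max_of_le_left (hC x hx)
  · simp [hx]

lemma neg_phi_indicator_le_IminE [T4Space S] (hmon : Monetary (Bb S) φ) {B : Set S}
    (hB : MeasurableSet B) {x : S} (hx : x ∉ closure B) (r : ℝ) :
    ((-φ (B.indicator fun _ => r) : ℝ) : EReal) ≤ IminE φ x := by
  rcases le_or_gt r 0 with hr | hr
  · obtain ⟨g, hgB, hgx, hg⟩ := exists_bounded_mem_Icc_of_closed_of_le isClosed_closure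
      isClosed_singleton (disjoint_singleton_right.2 hx) hr
    have hφg : φ g ≤ φ (B.indicator fun _ => r) :=
      hmon.mono g.mem_Bb (indicator_const_mem_Bb hB r) fun y => by
        by_cases hy : y ∈ B
        · simp [hy, hgB (subset_closure hy)]
        · simp [hy, (hg y).2]
    calc ((-φ (B.indicator fun _ => r) : ℝ) : EReal) ≤ ((g x - φ g : ℝ) : EReal) := by
          rw [hgx rfl]; exact_mod_cast (by simp; linarith)
      _ ≤ IminE φ x := le_IminE g x
  · have : 0 ≤ φ (B.indicator fun _ => r) :=
      hmon.const_le (indicator_const_mem_Bb hB r) fun y => indicator_nonneg (fun _ _ => hr.le) y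
    exact (EReal.coe_le_coe_iff.2 (neg_nonpos.2 this)).trans (IminE_nonneg hmon.1 x)

lemma phi_indicator_add_le [T2Space S] (hmon : Monetary (Bb S) φ) {K : Set S}
    (hK : IsCompact K) (hms : MaxStable (CK K) φ) (h : S →ᵇ ℝ) (r r' : ℝ) :
    φ (K.indicator h + Kᶜ.indicator fun _ => r) ≤
      max (φ h) (r + φ (K.indicator fun _ => r')) := by
  have hlow : ∀ y, -‖h‖ ≤ h y := fun y => (abs_le.1 (by simpa using h.norm_coe_le_norm y)).1
  set a := min r (-‖h‖)
  set b := min (r + r') (-‖h‖)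
  set v := K.indicator h + Kᶜ.indicator fun _ => a
  set w := K.indicator (fun _ => b) + Kᶜ.indicator fun _ => r
  have hv : v ∈ CK K := ⟨h, a, h.continuous.continuousOn, rfl⟩
  have hw : w ∈ CK K := ⟨_, r, continuousOn_const, rfl⟩
  have hvw : K.indicator h + Kᶜ.indicator (fun _ => r) = v ⊔ w := by
    ext y
    by_cases hy : y ∈ K
    · simp [v, w, hy, b, hlow y]
    · simp [v, w, hy, a]
  have hφv : φ v ≤ φ h := hmon.mono (CK_subset_Bb hK hv) h.mem_Bb fun y => by
    by_cases hy : y ∈ K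
    · simp [v, hy]
    · simp [v, hy, a, hlow y]
  have hφw : φ w ≤ r + φ (K.indicator fun _ => r') := by
    have hw' : w = K.indicator (fun _ => b - r) + fun _ => r := by
      ext y; by_cases hy : y ∈ K <;> simp [w, hy]
    have hbr : φ (K.indicator fun _ => b - r) ≤ φ (K.indicator fun _ => r') :=
      hmon.mono (indicator_const_mem_Bb hK.isClosed.measurableSet _)
        (indicator_const_mem_Bb hK.isClosed.measurableSet _)
        fun y => indicator_le_indicator (by linarith [min_le_left (r + r') (-‖h‖)])
    rw [hw', hmon.map_add_const (indicator_const_mem_Bb hK.isClosed.measurableSet _)]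
    linarith
  calc φ (K.indicator h + Kᶜ.indicator fun _ => r) ≤ max (φ v) (φ w) := hvw ▸ hms v hv w hw
    _ ≤ _ := max_le_max hφv hφw

lemma exists_phi_eq_lt_of_lt_IminE (hmon : Monetary (Bb S) φ) (f : S →ᵇ ℝ) {t : ℝ} {x : S}
    (hx : ((f x - t : ℝ) : EReal) < IminE φ x) : ∃ h : S →ᵇ ℝ, φ h = t ∧ f x < h x := by
  obtain ⟨g, hg⟩ := lt_iSup_iff.1 hx
  refine ⟨g + BoundedContinuousFunction.const S (t - φ g), ?_, ?_⟩
  · change φ (⇑g + fun _ => t - φ g) = t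
    rw [hmon.map_add_const g.mem_Bb]
    ring
  · have := EReal.coe_lt_coe_iff.1 hg
    simp only [BoundedContinuousFunction.coe_add, Pi.add_apply,
      BoundedContinuousFunction.const_apply']
    linarith

lemma phi_le_max_of_lt_IminE [T2Space S] (hmon : Monetary (Bb S) φ) {K : Set S}
    (hK : IsCompact K) (hms : MaxStable (CK K) φ) (f : S →ᵇ ℝ) (t r' : ℝ)
    (hf : ∀ x ∈ K, ((f x - t : ℝ) : EReal) < IminE φ x) :
    φ f ≤ max t (‖f‖ + φ (K.indicator fun _ => r')) := by
  have hf_le_norm : ∀ y, f y ≤ ‖f‖ := fun y =>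
    (le_abs_self _).trans (by simpa using f.norm_coe_le_norm y)
  rcases K.eq_empty_or_nonempty with rfl | hKne
  · rw [indicator_empty, hmon.map_const, add_zero]
    exact le_max_of_le_right (hmon.le_const f.mem_Bb hf_le_norm)
  choose h hφh hfh using fun x : K => exists_phi_eq_lt_of_lt_IminE hmon f (hf x x.2)
  obtain ⟨T, hT⟩ := hK.elim_finite_subcover (fun x => {y | f y < h x y})
    (fun x => isOpen_lt f.continuous (h x).continuous)
    (fun y hy => mem_iUnion.2 ⟨⟨y, hy⟩, hfh ⟨y, hy⟩⟩)
  have hTne : T.Nonempty := by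
    obtain ⟨y, hy⟩ := hKne
    obtain ⟨x, hx, -⟩ := mem_iUnion₂.1 (hT hy)
    exact ⟨x, hx⟩
  set u : K → S → ℝ := fun x => K.indicator (h x) + Kᶜ.indicator fun _ => ‖f‖
  have hu : ∀ x, u x ∈ CK K := fun x => ⟨h x, ‖f‖, (h x).continuous.continuousOn, rfl⟩
  have hf_le : ⇑f ≤ T.sup' hTne u := fun y => by
    rw [Finset.sup'_apply]
    by_cases hy : y ∈ K
    · obtain ⟨x, hx, hyx⟩ := mem_iUnion₂.1 (hT hy)
      refine le_trans ?_ (Finset.le_sup' (fun x => u x y) hx)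
      simpa [u, hy] using le_of_lt hyx
    · obtain ⟨x, hx⟩ := hTne
      refine le_trans ?_ (Finset.le_sup' (fun x => u x y) hx)
      simpa [u, hy] using hf_le_norm y
  have hsup_mem : T.sup' hTne u ∈ CK K :=
    Finset.sup'_mem _ (fun _ hv _ hw => sup_mem_CK hv hw) _ _ _ fun x _ => hu x
  calc φ f ≤ φ (T.sup' hTne u) := hmon.mono f.mem_Bb (CK_subset_Bb hK hsup_mem) hf_le
    _ ≤ _ := hms.finset_sup'_le (fun _ hv _ hw => sup_mem_CK hv hw) hTne fun x _ =>
      ⟨hu x, by simpa [hφh] using phi_indicator_add_le hmon hK hms (h x) ‖f‖ r'⟩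

lemma phi_le_of_lt_IminE [T2Space S] (hmon : Monetary (Bb S) φ)
    (hloc : LocallyMaxStable φ) (htight : Tight φ)
    (f : S →ᵇ ℝ) (t : ℝ) (hf : ∀ x, ((f x - t : ℝ) : EReal) < IminE φ x) :
    φ f ≤ t := by
  obtain ⟨K, hK, r', hr'⟩ := exists_isCompact_phi_indicator_lt htight (‖f‖ - t)
  refine (phi_le_max_of_lt_IminE hmon hK (hloc K hK) f t r' fun x _ => hf x).trans ?_
  exact max_le le_rfl (by linarith)

theorem phi_eq_iSup_sub_IminE [T2Space S] (hmon : Monetary (Bb S) φ)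
    (hloc : LocallyMaxStable φ) (htight : Tight φ)
    (f : S →ᵇ ℝ) : (φ f : EReal) = ⨆ x : S, ((f x : ℝ) : EReal) - IminE φ x := by
  refine le_antisymm ?_ (iSup_le fun x => EReal.coe_sub_le_iff_sub_le.1 (le_IminE f x))
  by_contra! h
  obtain ⟨t, hsup, ht⟩ := EReal.exists_between_coe_real h
  have := phi_le_of_lt_IminE hmon hloc htight f t fun x =>
    EReal.coe_sub_lt_iff_sub_lt.2 ((le_iSup _ x).trans_lt hsup)
  exact ht.not_ge (EReal.coe_le_coe_iff.2 this)

theorem neg_iInf_interior_IminE_le_conc [T4Space S] (hmon : Monetary (Bb S) φ) {A : Set S}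
    (hA : MeasurableSet A) : -(⨅ x ∈ interior A, IminE φ x) ≤ conc φ A := by
  rw [EReal.neg_le]
  refine le_iInf₂ fun x hx => ?_
  rw [← EReal.neg_le, conc]
  refine le_iInf fun r => ?_
  rw [EReal.neg_le, ← EReal.coe_neg]
  exact neg_phi_indicator_le_IminE hmon hA.compl (by rwa [closure_compl, mem_compl_iff, not_not]) r

theorem conc_le_neg_iInf_closure_IminE [T4Space S] (hmon : Monetary (Bb S) φ)
    (hloc : LocallyMaxStable φ) (htight : Tight φ)
    {A : Set S} (hA : MeasurableSet A) : conc φ A ≤ -(⨅ x ∈ closure A, IminE φ x) := by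
  by_contra! h
  obtain ⟨t, hinf, ht⟩ := EReal.exists_between_coe_real h
  have hA_gt : ∀ x ∈ closure A, ((-t : ℝ) : EReal) < IminE φ x := fun x hx =>
    (EReal.neg_lt_comm.1 hinf).trans_le (iInf₂_le x hx)
  set r := min t 0 - 1
  obtain ⟨g, hgL, hgA, hg⟩ := exists_bounded_mem_Icc_of_closed_of_le
    (isClosed_setOf_IminE_le (φ := φ) ((-t : ℝ) : EReal)) isClosed_closure
    (disjoint_left.2 fun x hxL hxA => (hA_gt x hxA).not_ge hxL)
    (by linarith [min_le_right t 0] : r ≤ 0)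
  have hφg : φ g ≤ t := phi_le_of_lt_IminE hmon hloc htight g t fun x => by
    by_cases hx : IminE φ x ≤ ((-t : ℝ) : EReal)
    · rw [hgL hx, Function.const_apply]
      exact (EReal.coe_lt_coe_iff.2 (by linarith [min_le_left t 0])).trans_le
        (IminE_nonneg hmon.1 x)
    · exact (EReal.coe_le_coe_iff.2 (by linarith [(hg x).2])).trans_lt (not_le.1 hx)
  have hφA : φ (Aᶜ.indicator fun _ => r) ≤ φ g :=
    hmon.mono (indicator_const_mem_Bb hA.compl r) g.mem_Bb fun y => by
      by_cases hy : y ∈ A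
      · simp [hy, hgA (subset_closure hy)]
      · simp [hy, (hg y).1]
  exact ht.not_ge ((iInf_le _ r).trans (EReal.coe_le_coe_iff.2 (hφA.trans hφg)))

theorem isCompact_setOf_IminE_le [T4Space S] (hmon : Monetary (Bb S) φ) (htight : Tight φ)
    (r : ℝ) : IsCompact {x : S | IminE φ x ≤ (r : EReal)} := by
  obtain ⟨K, hK, r', hr'⟩ := exists_isCompact_phi_indicator_lt htight r
  refine hK.of_isClosed_subset (isClosed_setOf_IminE_le _) fun x hx => ?_
  by_contra hxK
  have := (neg_phi_indicator_le_IminE hmon hK.isClosed.measurableSet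
    (by rwa [hK.isClosed.closure_eq]) r').trans hx
  linarith [EReal.coe_le_coe_iff.1 this]

end Topological

end RiskMeasure

theorem stmt19 {S : Type*} [MetricSpace S] [MeasurableSpace S] [BorelSpace S]
    (φ : (S → ℝ) → ℝ) (hmon : Monetary (Bb S) φ)
    (hloc : ∀ K : Set S, IsCompact K → MaxStable (CK K) φ)
    (htight : ∀ M : ℝ, 0 < M →
      ∃ K : Set S, IsCompact K ∧ conc φ Kᶜ ≤ ((-M : ℝ) : EReal)) :
    (∀ f : BoundedContinuousFunction S ℝ,
      (φ ⇑f : EReal) = ⨆ x : S, (((f x : ℝ) : EReal) - IminE φ x)) ∧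
    (∀ A : Set S, MeasurableSet A →
      -(⨅ x ∈ interior A, IminE φ x) ≤ conc φ A ∧
        conc φ A ≤ -(⨅ x ∈ closure A, IminE φ x)) ∧
    (∀ r : ℝ, IsCompact {x : S | IminE φ x ≤ (r : EReal)}) :=
  ⟨phi_eq_iSup_sub_IminE hmon hloc htight,
    fun _ hA => ⟨neg_iInf_interior_IminE_le_conc hmon hA,
      conc_le_neg_iInf_closure_IminE hmon hloc htight hA⟩,
    isCompact_setOf_IminE_le hmon htight⟩
end
end
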